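/- arXiv:1509.06167 — 3 statements merged into one kernel-verified Lean document; each statement's English description precedes it below -/
import Mathlib

section
/- Let T be a string over an alphabet Σ and let Q be a node-string of T with |Q| ≥ 1. Then the set S = { a : ⌈|Q|/2⌉ ≤ a ≤ |Q| and Q.take a is a node-string of T } is nonempty (it contains |Q|), and for its least element â, both A₁ = Q.take â and A₂ = Q.drop â are node-strings of T with Q = A₁ ++ A₂. (This is the paper's Lemma 2: for every node ω of the suffix tree corresponding to Q there exists a halving pair α₁, α₂ corresponding to A₁ = Q[1,â] and A₂ = Q[â+1,·] for the smallest â ≥ ⌈|Q|/2⌉ such that α₁ exists in the suffix tree.) -/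
/-- A string `W` is right-branching in `T` if there are two distinct characters `c₁ ≠ c₂`
such that both `W ++ [c₁]` and `W ++ [c₂]` are substrings (infixes) of `T`. -/
def RightBranching {σ : Type*} (T W : List σ) : Prop :=
  ∃ c₁ c₂ : σ, c₁ ≠ c₂ ∧ (W ++ [c₁]) <:+: T ∧ (W ++ [c₂]) <:+: T

/-- `W` corresponds to an explicit node of the suffix tree of `T`:
`W` is empty, or a suffix of `T`, or a substring of `T` that is right-branching in `T`. -/
def NodeString {σ : Type*} (T W : List σ) : Prop :=
  W = [] ∨ W <:+ T ∨ (W <:+: T ∧ RightBranching T W)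

/-! The prefix half `Q.take â` is a node-string by the choice of `â`; the suffix half is one
because node-strings are closed under taking suffixes (suffix links of the suffix tree). -/

section

variable {σ : Type*} {T W V : List σ}

theorem RightBranching.of_suffix (hVW : V <:+ W) (hW : RightBranching T W) :
    RightBranching T V := by
  obtain ⟨c₁, c₂, hne, h₁, h₂⟩ := hW
  exact ⟨c₁, c₂, hne, (List.suffix_append_self_iff.2 hVW).isInfix.trans h₁,
    (List.suffix_append_self_iff.2 hVW).isInfix.trans h₂⟩

theorem NodeString.of_suffix (hVW : V <:+ W) (hW : NodeString T W) : NodeString T V := by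
  rcases hW with rfl | hsuf | ⟨hinf, hbr⟩
  · exact Or.inl (List.suffix_nil.1 hVW)
  · exact Or.inr (Or.inl (hVW.trans hsuf))
  · exact Or.inr (Or.inr ⟨hVW.isInfix.trans hinf, hbr.of_suffix hVW⟩)

theorem NodeString.drop (n : ℕ) (hW : NodeString T W) : NodeString T (W.drop n) :=
  hW.of_suffix (W.drop_suffix n)

end

theorem suffix_tree_halving_pair_exists_general {σ : Type*} (T Q : List σ)
    (hQ : NodeString T Q)
    (S : Set ℕ)
    (hS : S = {a : ℕ | (Q.length + 1) / 2 ≤ a ∧ a ≤ Q.length ∧ NodeString T (Q.take a)}) :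
    Q.length ∈ S ∧
    NodeString T (Q.take (sInf S)) ∧
    NodeString T (Q.drop (sInf S)) ∧
    Q = Q.take (sInf S) ++ Q.drop (sInf S) := by
  subst hS
  have hmem : Q.length ∈ {a : ℕ | (Q.length + 1) / 2 ≤ a ∧ a ≤ Q.length ∧
      NodeString T (Q.take a)} :=
    ⟨by omega, le_rfl, by rwa [List.take_length]⟩
  exact ⟨hmem, (Nat.sInf_mem ⟨_, hmem⟩).2.2, hQ.drop _, (List.take_append_drop _ _).symm⟩

/-- paper's Lemma 2: Let `Q` be a node-string of `T` with `|Q| ≥ 1`, and let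
`S = { a | ⌈|Q|/2⌉ ≤ a ≤ |Q| ∧ Q.take a is a node-string of T }`.  Then `|Q| ∈ S` (so `S`
is nonempty), and for its least element `â = sInf S`, both `A₁ = Q.take â` and
`A₂ = Q.drop â` are node-strings of `T`, with `Q = A₁ ++ A₂`. -/
theorem suffix_tree_halving_pair_exists {σ : Type*} (T Q : List σ)
    (hQ : NodeString T Q) (hlen : 1 ≤ Q.length)
    (S : Set ℕ)
    (hS : S = {a : ℕ | (Q.length + 1) / 2 ≤ a ∧ a ≤ Q.length ∧ NodeString T (Q.take a)}) :
    Q.length ∈ S ∧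
    NodeString T (Q.take (sInf S)) ∧
    NodeString T (Q.drop (sInf S)) ∧
    Q = Q.take (sInf S) ++ Q.drop (sInf S) :=
  suffix_tree_halving_pair_exists_general T Q hQ S hS
end

section
/- Let p = 2^x with x ≥ 1, let m be a natural number, and set r = m mod p. For 1 ≤ i ≤ p define len_i = ⌊m/p⌋ + 1 if reverseBits_x(i − 1) < r, and len_i = ⌊m/p⌋ otherwise. Then: (a) Σ_{i=1}^{p} len_i = m; and (b) for every level j with 1 ≤ j ≤ x and every block of consecutive indices B = {c·2^j + 1, ..., (c+1)·2^j} with 0 ≤ c < 2^{x−j}, the sum of len_i over the first half of B (indices c·2^j + 1, ..., c·2^j + 2^{j−1}) equals ⌈(Σ_{i∈B} len_i)/2⌉. (This is the correctness of the subquery length assignment in Algorithm 2 of the paper: the bit-reversal assignment of the ⌈m/p⌉-length subqueries guarantees that each of the lg p rounds of pairwise concatenation in Algorithm 1 merges exactly the halving pair, the left part having length ⌈·/2⌉ of the concatenation.) -/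
/-- `reverseBits x j` is the natural number obtained by writing `j` in binary with
exactly `x` bits and reversing the order of those bits. -/
def reverseBits (x j : ℕ) : ℕ :=
  ∑ t ∈ Finset.range x, if j.testBit t then 2 ^ (x - 1 - t) else 0

/-!
Write `x = j + k`. The position `c·2^j + t` (counted from `0`, with `t < 2^j`) has bit
reversal `2^k · reverseBits j t + reverseBits k c`. As `reverseBits j` permutes `[0, 2^j)`,
the block `c` of level `j` receives `q = ⌊m/p⌋` per position plus one extra unit for each
`s < 2^j` with `2^k s + reverseBits k c < r`; these `s` form an initial segment of length `n`.
The first half of that block is the block `2c` of level `j - 1`, and since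
`reverseBits (k + 1) (2c) = reverseBits k c` its extra units are counted by the even `s` in the
same segment, of which there are `⌈n/2⌉`.
-/

open Finset

lemma reverseBits_succ (x j : ℕ) :
    reverseBits (x + 1) j = j % 2 * 2 ^ x + reverseBits x (j / 2) := by
  rw [reverseBits, sum_range_succ', reverseBits, add_comm]
  congr 1
  · rw [Nat.testBit_zero]
    rcases Nat.mod_two_eq_zero_or_one j with h | h <;> simp [h]
  · refine sum_congr rfl fun t _ => ?_
    rw [Nat.testBit_succ, show x + 1 - 1 - (t + 1) = x - 1 - t by omega]

lemma reverseBits_lt (x j : ℕ) : reverseBits x j < 2 ^ x := by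
  induction x generalizing j with
  | zero => simp [reverseBits]
  | succ x ih =>
    have := ih (j / 2)
    rw [reverseBits_succ, pow_succ]
    rcases Nat.mod_two_eq_zero_or_one j with h | h <;> rw [h] <;> omega

lemma reverseBits_injOn (x : ℕ) : Set.InjOn (reverseBits x) (Set.Iio (2 ^ x)) := by
  induction x with
  | zero => intro j hj k hk _; simp_all
  | succ x ih =>
    intro j hj k hk h
    simp only [Set.mem_Iio, pow_succ] at hj hk
    rw [reverseBits_succ, reverseBits_succ] at h
    have := reverseBits_lt x (j / 2)
    have := reverseBits_lt x (k / 2)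
    have hmod : j % 2 = k % 2 := by
      rcases Nat.mod_two_eq_zero_or_one j with h1 | h1 <;>
        rcases Nat.mod_two_eq_zero_or_one k with h2 | h2 <;> rw [h1, h2] at h ⊢ <;> omega
    have hdiv : j / 2 = k / 2 := by
      refine ih (by simp; omega) (by simp; omega) ?_
      rw [hmod] at h; omega
    omega

lemma image_reverseBits_range (x : ℕ) :
    (range (2 ^ x)).image (reverseBits x) = range (2 ^ x) := by
  refine eq_of_subset_of_card_le (fun y hy => ?_) ?_
  · obtain ⟨j, -, rfl⟩ := mem_image.mp hy
    exact mem_range.mpr (reverseBits_lt x j)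
  · rw [card_image_of_injOn (by simpa using reverseBits_injOn x)]

lemma card_filter_reverseBits (x : ℕ) (P : ℕ → Prop) [DecidablePred P] :
    #{t ∈ range (2 ^ x) | P (reverseBits x t)} = #{s ∈ range (2 ^ x) | P s} := by
  conv_rhs => rw [← image_reverseBits_range x]
  rw [filter_image, card_image_of_injOn]
  exact (reverseBits_injOn x).mono fun t ht => by simpa using (mem_filter.mp ht).1

lemma reverseBits_mul_pow_add (j k c : ℕ) {t : ℕ} (ht : t < 2 ^ j) :
    reverseBits (j + k) (c * 2 ^ j + t) = 2 ^ k * reverseBits j t + reverseBits k c := by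
  induction j generalizing t with
  | zero =>
    obtain rfl : t = 0 := by simpa using ht
    simp [reverseBits]
  | succ j ih =>
    rw [pow_succ] at ht
    have hsplit : c * 2 ^ (j + 1) + t = 2 * (c * 2 ^ j) + t := by ring
    have hmod : (c * 2 ^ (j + 1) + t) % 2 = t % 2 := by omega
    have hdiv : (c * 2 ^ (j + 1) + t) / 2 = c * 2 ^ j + t / 2 := by omega
    rw [show j + 1 + k = j + k + 1 by omega, reverseBits_succ, hmod, hdiv, ih (by omega),
      reverseBits_succ]
    ring

lemma reverseBits_two_mul (k c : ℕ) : reverseBits (k + 1) (2 * c) = reverseBits k c := by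
  simp [reverseBits_succ]

lemma sum_block_eq_mul_add_card {x j k q r c : ℕ} {len : ℕ → ℕ} (hx : j + k = x)
    (hc : c < 2 ^ k)
    (hlen : ∀ i, 1 ≤ i → i ≤ 2 ^ x →
      len i = if reverseBits x (i - 1) < r then q + 1 else q) :
    ∑ i ∈ Icc (c * 2 ^ j + 1) ((c + 1) * 2 ^ j), len i =
      2 ^ j * q + #{s ∈ range (2 ^ j) | 2 ^ k * s + reverseBits k c < r} := by
  subst hx
  have hblock : c * 2 ^ j + 2 ^ j ≤ 2 ^ (j + k) := by
    rw [← add_one_mul, pow_add, mul_comm (2 ^ j)]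
    exact Nat.mul_le_mul_right _ hc
  have hterm : ∀ t ∈ range (2 ^ j), len (c * 2 ^ j + 1 + t) =
      q + if 2 ^ k * reverseBits j t + reverseBits k c < r then 1 else 0 := by
    intro t ht
    have ht := mem_range.mp ht
    rw [hlen _ (by omega) (by omega),
      show c * 2 ^ j + 1 + t - 1 = c * 2 ^ j + t by omega, reverseBits_mul_pow_add j k c ht]
    split_ifs <;> rfl
  rw [← Ico_add_one_right_eq_Icc, sum_Ico_eq_sum_range,
    show (c + 1) * 2 ^ j + 1 - (c * 2 ^ j + 1) = 2 ^ j by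
      rw [add_one_mul, add_right_comm, Nat.add_sub_cancel_left],
    sum_congr rfl hterm, sum_add_distrib, ← card_filter, card_filter_reverseBits j
      (fun s => 2 ^ k * s + reverseBits k c < r), sum_const, card_range, smul_eq_mul]

lemma exists_mul_add_lt_iff_lt {d : ℕ} (hd : 0 < d) (a r : ℕ) :
    ∃ K, ∀ s, d * s + a < r ↔ s < K :=
  ⟨(r - a) ⌈/⌉ d, fun s => by
    rw [← not_iff_not, not_lt, not_lt, ceilDiv_le_iff_le_mul hd]
    omega⟩

lemma card_filter_two_mul_lt (h K : ℕ) :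
    #{s ∈ range h | 2 * s < K} = (#{s ∈ range (2 * h) | s < K} + 1) / 2 := by
  have hhalf : {s ∈ range h | 2 * s < K} = range (min h ((K + 1) / 2)) := by
    ext; simp only [mem_filter, mem_range]; omega
  have hfull : {s ∈ range (2 * h) | s < K} = range (min (2 * h) K) := by
    ext; simp only [mem_filter, mem_range]; omega
  rw [hhalf, hfull, card_range, card_range]
  omega

theorem bit_reversal_assignment_correct_general (x : ℕ) (m p r : ℕ)
    (hp : p = 2 ^ x) (hr : r = m % p) (len : ℕ → ℕ)
    (hlen : ∀ i, 1 ≤ i → i ≤ p →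
      len i = if reverseBits x (i - 1) < r then m / p + 1 else m / p) :
    (∑ i ∈ Finset.Icc 1 p, len i) = m ∧
    ∀ j, 1 ≤ j → j ≤ x → ∀ c, c < 2 ^ (x - j) →
      (∑ i ∈ Finset.Icc (c * 2 ^ j + 1) (c * 2 ^ j + 2 ^ (j - 1)), len i) =
        ((∑ i ∈ Finset.Icc (c * 2 ^ j + 1) ((c + 1) * 2 ^ j), len i) + 1) / 2 := by
  subst hp hr
  refine ⟨?_, ?_⟩
  · have hr : m % 2 ^ x < 2 ^ x := Nat.mod_lt _ (by positivity)
    have hall := sum_block_eq_mul_add_card (j := x) (k := 0) (c := 0) (add_zero x) (by simp) hlen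
    have hcount : {s ∈ range (2 ^ x) | s < m % 2 ^ x} = range (m % 2 ^ x) := by
      ext; simp only [mem_filter, mem_range]; omega
    simp only [zero_mul, zero_add, one_mul, pow_zero, reverseBits, range_zero, sum_empty,
      add_zero, hcount, card_range] at hall
    rw [hall, Nat.div_add_mod]
  · intro j hj hjx c hc
    obtain ⟨i, rfl⟩ : ∃ i, j = i + 1 := ⟨j - 1, by omega⟩
    obtain ⟨k, hk⟩ : ∃ k, i + 1 + k = x := ⟨x - (i + 1), by omega⟩
    rw [show x - (i + 1) = k by omega] at hc
    have hfull := sum_block_eq_mul_add_card hk hc hlen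
    have hhalf := sum_block_eq_mul_add_card (j := i) (k := k + 1) (c := 2 * c) (by omega)
      (by rw [pow_succ]; omega) hlen
    obtain ⟨K, hK⟩ := exists_mul_add_lt_iff_lt (d := 2 ^ k) (by positivity) (reverseBits k c)
      (m % 2 ^ x)
    simp only [reverseBits_two_mul, pow_succ, mul_assoc, hK] at hhalf
    simp only [hK] at hfull
    rw [Nat.add_sub_cancel, hfull, show c * 2 ^ (i + 1) + 2 ^ i = (2 * c + 1) * 2 ^ i by ring,
      show c * 2 ^ (i + 1) = 2 * (c * 2 ^ i) by ring, hhalf, card_filter_two_mul_lt, pow_succ,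
      mul_comm (2 ^ i) 2, mul_assoc]
    omega

/-- correctness of the subquery length assignment, paper's Algorithm 2:
let `p = 2^x` with `x ≥ 1`, `r = m mod p`, and for `1 ≤ i ≤ p` let
`len i = ⌊m/p⌋ + 1` if `reverseBits x (i − 1) < r` and `len i = ⌊m/p⌋` otherwise.  Then
(a) `∑_{i=1}^{p} len i = m`, and (b) for every level `1 ≤ j ≤ x` and every block
`B = {c·2^j + 1, …, (c+1)·2^j}` with `c < 2^{x−j}`, the sum of `len` over the first
half of `B` equals `⌈(∑_{i∈B} len i)/2⌉`. -/
theorem bit_reversal_assignment_correct (x : ℕ) (hx : 1 ≤ x) (m p r : ℕ)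
    (hp : p = 2 ^ x) (hr : r = m % p) (len : ℕ → ℕ)
    (hlen : ∀ i, 1 ≤ i → i ≤ p →
      len i = if reverseBits x (i - 1) < r then m / p + 1 else m / p) :
    (∑ i ∈ Finset.Icc 1 p, len i) = m ∧
    ∀ j, 1 ≤ j → j ≤ x → ∀ c, c < 2 ^ (x - j) →
      (∑ i ∈ Finset.Icc (c * 2 ^ j + 1) (c * 2 ^ j + 2 ^ (j - 1)), len i) =
        ((∑ i ∈ Finset.Icc (c * 2 ^ j + 1) ((c + 1) * 2 ^ j), len i) + 1) / 2 :=
  bit_reversal_assignment_correct_general x m p r hp hr len hlen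
end

section
/- Let k ≥ 1 and let T be a string of length n ≥ k over an alphabet Σ whose last k characters are pairwise distinct and each occurs exactly once in T (the k delimiter characters). Then: (a) for each 1 ≤ i ≤ k, the last character of the i-th k-interleaved subsequence T_i^(k) is one of the last k characters of T, and distinct subsequences end with distinct delimiter characters; (b) the nonempty suffixes of T_1^(k), ..., T_k^(k) are pairwise distinct (both within one subsequence and across different subsequences), and their total number is exactly n. -/
/-- The `i`-th `k`-interleaved subsequence of `T`: the subsequence of characters of `T`
whose (1-indexed) positions are congruent to `i` modulo `k`, i.e. positions
`i, i + k, i + 2k, …`. -/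
def subseqMod {σ : Type*} (T : List σ) (k i : ℕ) : List σ :=
  ((T.zipIdx.map Prod.swap).filter (fun p => (p.1 + 1) % k = i % k)).map Prod.snd

private lemma getLast?_of_max {α : Type*} {L : List (ℕ × α)}
    (hL : L.Pairwise (fun a b => a.1 < b.1)) {p : ℕ × α} (hp : p ∈ L)
    (hmax : ∀ q ∈ L, q.1 ≤ p.1) : L.getLast? = some p := by
  induction L with
  | nil => simp at hp
  | cons a l ih =>
    cases l with
    | nil =>
      simp at hp
      simp [hp]
    | cons b m =>
      rw [List.getLast?_cons_cons]
      rcases List.mem_cons.mp hp with rfl | hp'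
      · exfalso
        have hab : p.1 < b.1 := (List.pairwise_cons.mp hL).1 b (by simp)
        have := hmax b (by simp)
        omega
      · exact ih hL.of_cons hp' (fun q hq => hmax q (List.mem_cons_of_mem _ hq))

private lemma tails_nodup {α : Type*} (L : List α) : L.tails.Nodup := by
  induction L with
  | nil => simp
  | cons a l ih =>
    rw [List.tails_cons]
    refine List.nodup_cons.mpr ⟨?_, ih⟩
    intro h
    have := ((List.mem_tails _ _).mp h).length_le
    simp at this

private lemma tails_filter_length {α : Type*} [DecidableEq α] (L : List α) :
    (L.tails.filter (fun S => S ≠ [])).length = L.length := by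
  induction L with
  | nil => simp
  | cons a l ih =>
    rw [List.tails_cons, List.filter_cons_of_pos (by simp), List.length_cons, ih, List.length_cons]

/-- role of the `k` unique delimiter characters; paper's Property 3:
let `k ≥ 1` and let `T` be a string of length `n ≥ k` whose last `k` characters are
pairwise distinct and each occurs exactly once in `T`.  Then
(a) each `k`-interleaved subsequence `T_i^(k)` ends with one of the last `k`
characters of `T`, and distinct subsequences end with distinct delimiter characters;
(b) the nonempty suffixes of `T_1^(k), …, T_k^(k)` are pairwise distinct (no nonempty
string is a suffix of two different subsequences, and within one subsequence suffixes
are distinct anyway), and their total number is exactly `n`. -/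
theorem delimiters_make_suffixes_distinct {σ : Type*} [DecidableEq σ]
    (T : List σ) (k : ℕ) (hk : 1 ≤ k) (hkn : k ≤ T.length)
    (hnodup : (T.drop (T.length - k)).Nodup)
    (honce : ∀ c ∈ T.drop (T.length - k), T.count c = 1) :
    (∀ i, 1 ≤ i → i ≤ k →
      ∃ c, (subseqMod T k i).getLast? = some c ∧ c ∈ T.drop (T.length - k)) ∧
    (∀ i i', 1 ≤ i → i ≤ k → 1 ≤ i' → i' ≤ k → i ≠ i' →
      (subseqMod T k i).getLast? ≠ (subseqMod T k i').getLast?) ∧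
    (∀ i i', 1 ≤ i → i ≤ k → 1 ≤ i' → i' ≤ k → i ≠ i' →
      ∀ S : List σ, S ≠ [] → S <:+ subseqMod T k i → ¬ S <:+ subseqMod T k i') ∧
    {S : List σ | S ≠ [] ∧ ∃ i, 1 ≤ i ∧ i ≤ k ∧ S <:+ subseqMod T k i}.ncard =
      T.length := by
  classical
  have hkpos : 0 < k := hk
  set n := T.length with hn
  -- residues of i ∈ [1,k]
  have hmodval : ∀ j, 1 ≤ j → j ≤ k → j % k = if j = k then 0 else j := by
    intro j hj1 hj2
    rcases eq_or_lt_of_le hj2 with rfl | h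
    · simp
    · rw [if_neg h.ne, Nat.mod_eq_of_lt h]
  have hres : ∀ i i', 1 ≤ i → i ≤ k → 1 ≤ i' → i' ≤ k → i ≠ i' → i % k ≠ i' % k := by
    intro i i' h1 h2 h3 h4 hne heq
    rw [hmodval i h1 h2, hmodval i' h3 h4] at heq
    split_ifs at heq <;> omega
  -- the last selected position for each i
  have hkey : ∀ i, 1 ≤ i → i ≤ k →
      ∃ j0 : ℕ, j0 < n ∧ n - k ≤ j0 ∧ (j0 + 1) % k = i % k ∧
        ∀ j, j < n → (j + 1) % k = i % k → j ≤ j0 := by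
    intro i h1 h2
    have hin : i ≤ n := le_trans h2 hkn
    have hrk : (n - i) % k < k := Nat.mod_lt _ hkpos
    have hsum : (n - i) / k * k + (n - i) % k = n - i := Nat.div_add_mod' _ _
    refine ⟨i + (n - i) / k * k - 1, by omega, by omega, ?_, ?_⟩
    · have h : i + (n - i) / k * k - 1 + 1 = i + (n - i) / k * k := by omega
      rw [h, Nat.add_mul_mod_self_right]
    · intro j hj hmod
      by_contra hgt
      push_neg at hgt
      have hle : i + (n - i) / k * k ≤ j + 1 := by omega
      have hcong : (i + (n - i) / k * k) ≡ (j + 1) [MOD k] := by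
        show (i + (n - i) / k * k) % k = (j + 1) % k
        rw [Nat.add_mul_mod_self_right, hmod]
      have hdvd : k ∣ (j + 1) - (i + (n - i) / k * k) :=
        (Nat.modEq_iff_dvd' hle).mp hcong
      have hpos : 0 < (j + 1) - (i + (n - i) / k * k) := by omega
      have := Nat.le_of_dvd hpos hdvd
      omega
  -- pairwise increasing first components of enum
  have hpair : (T.zipIdx.map Prod.swap).Pairwise (fun a b => a.1 < b.1) := by
    have h := List.pairwise_lt_range (n := T.length)
    rw [List.range_eq_range', ← List.zipIdx_map_snd 0 T] at h
    rw [List.pairwise_map]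
    exact List.pairwise_map.mp h
  -- the last element of subseqMod T k i
  have hlast : ∀ i, 1 ≤ i → i ≤ k →
      ∃ j0 : ℕ, ∃ hj0 : j0 < n, n - k ≤ j0 ∧ (j0 + 1) % k = i % k ∧
        (subseqMod T k i).getLast? = some (T[j0]'(hn ▸ hj0)) := by
    intro i h1 h2
    obtain ⟨j0, hj0n, hj0k, hj0mod, hj0max⟩ := hkey i h1 h2
    refine ⟨j0, hj0n, hj0k, hj0mod, ?_⟩
    have hmem : (j0, T[j0]'(hn ▸ hj0n)) ∈
        (T.zipIdx.map Prod.swap).filter (fun p => (p.1 + 1) % k = i % k) := by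
      rw [List.mem_filter]
      refine ⟨List.mem_map.mpr ⟨(T[j0]'(hn ▸ hj0n), j0), List.mk_mem_zipIdx_iff_getElem?.mpr ?_, rfl⟩, by simpa using hj0mod⟩
      exact List.getElem?_eq_getElem _
    have hmax : ∀ q ∈ (T.zipIdx.map Prod.swap).filter (fun p => (p.1 + 1) % k = i % k), q.1 ≤ j0 := by
      rintro ⟨a, b⟩ hq
      rw [List.mem_filter] at hq
      have ha : T[a]? = some b := by
        obtain ⟨⟨x, y⟩, hxy, he⟩ := List.mem_map.mp hq.1
        simp only [Prod.swap_prod_mk, Prod.mk.injEq] at he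
        obtain ⟨rfl, rfl⟩ := he
        exact List.mk_mem_zipIdx_iff_getElem?.mp hxy
      have halt : a < n := by
        rw [hn]
        exact (List.getElem?_eq_some_iff.mp ha).1
      exact hj0max a halt (by simpa using hq.2)
    have := getLast?_of_max (hpair.filter _) hmem hmax
    show (((T.zipIdx.map Prod.swap).filter (fun p => (p.1 + 1) % k = i % k)).map Prod.snd).getLast? = _
    rw [List.getLast?_map, this]
    rfl
  have hdroplen : (T.drop (n - k)).length = k := by
    rw [List.length_drop]
    omega
  -- characters at distinct last-k positions are distinct
  have hchar : ∀ j j' (hj : j < n) (hj' : j' < n), n - k ≤ j → n - k ≤ j' →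
      T[j]'(hn ▸ hj) = T[j']'(hn ▸ hj') → j = j' := by
    intro j j' hj hj' hjk hj'k he
    have ht : j - (n - k) < (T.drop (n - k)).length := by omega
    have ht' : j' - (n - k) < (T.drop (n - k)).length := by omega
    have e1 : (T.drop (n - k))[j - (n - k)]'ht = T[j]'(hn ▸ hj) := by
      rw [List.getElem_drop]
      congr 1
      omega
    have e1' : (T.drop (n - k))[j' - (n - k)]'ht' = T[j']'(hn ▸ hj') := by
      rw [List.getElem_drop]
      congr 1
      omega
    have : j - (n - k) = j' - (n - k) := by
      rw [← hnodup.getElem_inj_iff (hi := ht) (hj := ht')]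
      rw [e1, e1', he]
    omega
  -- Part 1
  have part1 : ∀ i, 1 ≤ i → i ≤ k →
      ∃ c, (subseqMod T k i).getLast? = some c ∧ c ∈ T.drop (n - k) := by
    intro i h1 h2
    obtain ⟨j0, hj0, hjk, _, hlasteq⟩ := hlast i h1 h2
    refine ⟨_, hlasteq, ?_⟩
    have ht : j0 - (n - k) < (T.drop (n - k)).length := by omega
    have e1 : (T.drop (n - k))[j0 - (n - k)]'ht = T[j0]'(hn ▸ hj0) := by
      rw [List.getElem_drop]
      congr 1
      omega
    rw [← e1]
    exact List.getElem_mem _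
  -- Part 2
  have part2 : ∀ i i', 1 ≤ i → i ≤ k → 1 ≤ i' → i' ≤ k → i ≠ i' →
      (subseqMod T k i).getLast? ≠ (subseqMod T k i').getLast? := by
    intro i i' h1 h2 h3 h4 hne heq
    obtain ⟨j0, hj0, hjk, hjm, he⟩ := hlast i h1 h2
    obtain ⟨j0', hj0', hjk', hjm', he'⟩ := hlast i' h3 h4
    rw [he, he'] at heq
    have : j0 = j0' := hchar j0 j0' hj0 hj0' hjk hjk' (Option.some_injective _ heq)
    exact hres i i' h1 h2 h3 h4 hne (by rw [← hjm, ← hjm', this])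
  -- Part 3
  have part3 : ∀ i i', 1 ≤ i → i ≤ k → 1 ≤ i' → i' ≤ k → i ≠ i' →
      ∀ S : List σ, S ≠ [] → S <:+ subseqMod T k i → ¬ S <:+ subseqMod T k i' := by
    intro i i' h1 h2 h3 h4 hne S hS hsuf hsuf'
    obtain ⟨s, hs⟩ := Option.isSome_iff_exists.mp (List.getLast?_isSome.mpr hS)
    obtain ⟨U, hU⟩ := hsuf
    obtain ⟨U', hU'⟩ := hsuf'
    have e1 : (subseqMod T k i).getLast? = some s := by
      rw [← hU, List.getLast?_append, hs]
      rfl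
    have e2 : (subseqMod T k i').getLast? = some s := by
      rw [← hU', List.getLast?_append, hs]
      rfl
    exact part2 i i' h1 h2 h3 h4 hne (e1.trans e2.symm)
  refine ⟨part1, part2, part3, ?_⟩
  -- Part 4: counting
  have hlen : ∀ i, (subseqMod T k i).length
      = List.countP (fun j => decide ((j + 1) % k = i % k)) (List.range n) := by
    intro i
    show (((T.zipIdx.map Prod.swap).filter (fun p => (p.1 + 1) % k = i % k)).map Prod.snd).length = _
    rw [List.length_map, ← List.countP_eq_length_filter, hn, List.range_eq_range',
      ← List.zipIdx_map_snd 0 T, List.countP_map, List.countP_map]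
    rfl
  have hbridge : ∀ (p : ℕ → Prop) [DecidablePred p],
      ((Finset.range n).filter p).card
        = List.countP (fun j => decide (p j)) (List.range n) := by
    intro p _
    rw [List.countP_eq_length_filter]
    rfl
  have hsum : ∑ i ∈ Finset.Icc 1 k, (subseqMod T k i).length = n := by
    have hf : ∀ j ∈ Finset.range n,
        (if (j + 1) % k = 0 then k else (j + 1) % k) ∈ Finset.Icc 1 k := by
      intro j _
      have := Nat.mod_lt (j + 1) hkpos
      split_ifs with h
      · simp [Finset.mem_Icc]; omega
      · simp [Finset.mem_Icc]; omega
    have hcard := Finset.card_eq_sum_card_fiberwise hf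
    rw [Finset.card_range] at hcard
    calc ∑ i ∈ Finset.Icc 1 k, (subseqMod T k i).length
        = ∑ i ∈ Finset.Icc 1 k, ((Finset.range n).filter
            (fun j => (if (j + 1) % k = 0 then k else (j + 1) % k) = i)).card := by
          refine Finset.sum_congr rfl ?_
          intro i hi
          rw [Finset.mem_Icc] at hi
          rw [hlen i, ← hbridge]
          congr 1
          refine Finset.filter_congr ?_
          intro j _
          rw [hmodval i hi.1 hi.2]
          have := Nat.mod_lt (j + 1) hkpos
          constructor
          · intro h
            split_ifs at h ⊢ <;> omega
          · intro h
            split_ifs at h ⊢ <;> omega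
      _ = n := hcard.symm
  let F : ℕ → Finset (List σ) :=
    fun i => ((subseqMod T k i).tails.filter (fun S => S ≠ [])).toFinset
  have hFmem : ∀ i S, S ∈ F i ↔ (S ≠ [] ∧ S <:+ subseqMod T k i) := by
    intro i S
    simp [F, List.mem_filter, List.mem_tails]
    tauto
  have hset : {S : List σ | S ≠ [] ∧ ∃ i, 1 ≤ i ∧ i ≤ k ∧ S <:+ subseqMod T k i}
      = ↑((Finset.Icc 1 k).biUnion F) := by
    ext S
    simp only [Set.mem_setOf_eq, Finset.coe_biUnion, Set.mem_iUnion, Finset.mem_coe,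
      Finset.mem_Icc, hFmem]
    constructor
    · rintro ⟨hS, i, h1, h2, h3⟩
      exact ⟨i, ⟨h1, h2⟩, hS, h3⟩
    · rintro ⟨i, ⟨h1, h2⟩, hS, h3⟩
      exact ⟨hS, i, h1, h2, h3⟩
  rw [hset, Set.ncard_coe_finset, Finset.card_biUnion, ← hsum]
  · refine Finset.sum_congr rfl ?_
    intro i _
    rw [List.toFinset_card_of_nodup ((tails_nodup _).filter _), tails_filter_length]
  · intro i hi i' hi' hne
    rw [Finset.mem_coe, Finset.mem_Icc] at hi hi'
    rw [Function.onFun, Finset.disjoint_left]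
    intro S hSi hSi'
    rw [hFmem] at hSi hSi'
    exact part3 i i' hi.1 hi.2 hi'.1 hi'.2 hne S hSi.1 hSi.2 hSi'.2
end
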